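/- arXiv:1905.03913 — 2 statements merged into one kernel-verified Lean document; each statement's English description precedes it below -/
import Mathlib

section
/- Let Λ be a finite index set, let τ_1,…,τ_t > 0 be constants, and for each r = 1,…,t let Z_r ∈ ℝ^Λ be a random vector with i.i.d. standard normal entries, the Z_r mutually independent. If f : ℝ^{|Λ|(t+1)} → ℝ (viewed as a function of t+1 blocks in ℝ^Λ) is PL(2) with constant L, then the function f̃ : ℝ^Λ → ℝ defined by f̃(s) := E[f(τ_1 Z_1, …, τ_t Z_t, s)] is PL(2); moreover its PL(2) constant can be taken to be L(1 + 2|Λ|√(2/π) Σ_{r=1}^t τ_r). -/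
/-!
Write the random vector as `V + ι s`, where `V = ∑ᵣ τᵣ Zᵣ` fills the first `t` blocks and `ι`
embeds `ℝ^Λ` isometrically as the last block. Pointwise in the noise, the two arguments of `f`
then differ by exactly `‖x - y‖`, so integrating the PL(2) bound gives
`L (1 + E‖V + ι x‖ + E‖V + ι y‖) ‖x - y‖ ≤ L (1 + 2 E‖V‖) (1 + ‖x‖ + ‖y‖) ‖x - y‖`.
Finally `E‖V‖ ≤ ∑ᵣ τᵣ ∑ⱼ E|Zᵣⱼ| = |Λ| √(2/π) ∑ᵣ τᵣ`, since `E|N(0,1)| = √(2/π)`.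
All integrals exist because PL(2) functions grow at most quadratically and Gaussian vectors
have finite second moments.
-/

open MeasureTheory ProbabilityTheory

noncomputable section

def stdGaussian (ι : Type*) [Fintype ι] : Measure (ι → ℝ) :=
  Measure.pi fun _ => gaussianReal 0 1

open Filter Topology Real Set EuclideanSpace

def PseudoLipschitz2 {E : Type*} [NormedAddCommGroup E] (L : ℝ) (f : E → ℝ) : Prop :=
  ∀ x y, |f x - f y| ≤ L * (1 + ‖x‖ + ‖y‖) * ‖x - y‖

namespace PseudoLipschitz2

variable {E : Type*} [NormedAddCommGroup E] {L : ℝ} {f : E → ℝ}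

theorem mono (hf : PseudoLipschitz2 L f) {L' : ℝ} (hLL' : L ≤ L') : PseudoLipschitz2 L' f :=
  fun x y => (hf x y).trans <| by gcongr

theorem continuous (hf : PseudoLipschitz2 L f) : Continuous f := by
  refine continuous_iff_continuousAt.mpr fun x => tendsto_sub_nhds_zero_iff.mp ?_
  have hbound : Tendsto (fun y => L * (1 + ‖y‖ + ‖x‖) * ‖y - x‖) (𝓝 x) (𝓝 0) := by
    simpa using ((by fun_prop : Continuous fun y => L * (1 + ‖y‖ + ‖x‖) * ‖y - x‖).tendsto x)
  exact squeeze_zero_norm (fun y => hf y x) hbound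

theorem abs_le (hf : PseudoLipschitz2 L f) (x : E) : |f x| ≤ |f 0| + L * (1 + ‖x‖) * ‖x‖ := by
  have h := hf x 0
  simp only [norm_zero, add_zero, sub_zero] at h
  linarith [abs_sub_abs_le_abs_sub (f x) (f 0)]

variable {Ω : Type*} [MeasurableSpace Ω] {μ : Measure Ω}

theorem integrable_comp [IsFiniteMeasure μ] (hf : PseudoLipschitz2 L f) {X : Ω → E}
    (hX : MemLp X 2 μ) : Integrable (fun ω => f (X ω)) μ := by
  have hbound : Integrable (fun ω => |f 0| + L * ‖X ω‖ + L * ‖X ω‖ ^ 2) μ :=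
    ((integrable_const _).add ((hX.integrable one_le_two).norm.const_mul L)).add
      ((hX.integrable_norm_pow two_ne_zero).const_mul L)
  refine hbound.mono' (hf.continuous.comp_aestronglyMeasurable hX.1) (ae_of_all _ fun ω => ?_)
  rw [Real.norm_eq_abs]
  linarith [hf.abs_le (X ω)]

theorem abs_integral_sub_le [IsProbabilityMeasure μ] (hf : PseudoLipschitz2 L f) (hL : 0 ≤ L)
    {X Y : Ω → E} (hX : MemLp X 2 μ) (hY : MemLp Y 2 μ) {d : ℝ} (hXY : ∀ ω, ‖X ω - Y ω‖ ≤ d) :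
    |∫ ω, f (X ω) ∂μ - ∫ ω, f (Y ω) ∂μ| ≤ L * (1 + ∫ ω, ‖X ω‖ ∂μ + ∫ ω, ‖Y ω‖ ∂μ) * d := by
  have hXn := (hX.integrable one_le_two).norm
  have hYn := (hY.integrable one_le_two).norm
  calc |∫ ω, f (X ω) ∂μ - ∫ ω, f (Y ω) ∂μ|
      = |∫ ω, (f (X ω) - f (Y ω)) ∂μ| := by
        rw [integral_sub (hf.integrable_comp hX) (hf.integrable_comp hY)]
    _ ≤ ∫ ω, |f (X ω) - f (Y ω)| ∂μ := abs_integral_le_integral_abs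
    _ ≤ ∫ ω, L * d * (1 + ‖X ω‖ + ‖Y ω‖) ∂μ := by
        refine integral_mono ((hf.integrable_comp hX).sub (hf.integrable_comp hY)).abs
          (((integrable_const 1).add hXn).add hYn |>.const_mul _) fun ω => ?_
        calc |f (X ω) - f (Y ω)| ≤ L * (1 + ‖X ω‖ + ‖Y ω‖) * ‖X ω - Y ω‖ := hf _ _
          _ ≤ L * (1 + ‖X ω‖ + ‖Y ω‖) * d := by gcongr; exact hXY ω
          _ = L * d * (1 + ‖X ω‖ + ‖Y ω‖) := by ring
    _ = L * (1 + ∫ ω, ‖X ω‖ ∂μ + ∫ ω, ‖Y ω‖ ∂μ) * d := by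
        have h1X : Integrable (fun ω => 1 + ‖X ω‖) μ := (integrable_const 1).add hXn
        rw [integral_const_mul, integral_add h1X hYn, integral_add (integrable_const 1) hXn]
        simp only [integral_const, probReal_univ, smul_eq_mul, one_mul]
        ring

theorem integral_comp_add_linearIsometry [IsProbabilityMeasure μ] (hf : PseudoLipschitz2 L f)
    (hL : 0 ≤ L) {F : Type*} [NormedAddCommGroup F] [NormedSpace ℝ F] [NormedSpace ℝ E]
    (ι : F →ₗᵢ[ℝ] E) {V : Ω → E} (hV : MemLp V 2 μ) :
    PseudoLipschitz2 (L * (1 + 2 * ∫ ω, ‖V ω‖ ∂μ)) fun s => ∫ ω, f (V ω + ι s) ∂μ := by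
  have hVn := (hV.integrable one_le_two).norm
  have hmoment (s : F) : ∫ ω, ‖V ω + ι s‖ ∂μ ≤ ∫ ω, ‖V ω‖ ∂μ + ‖s‖ := by
    calc ∫ ω, ‖V ω + ι s‖ ∂μ ≤ ∫ ω, (‖V ω‖ + ‖s‖) ∂μ :=
          integral_mono ((hV.add (memLp_const (ι s))).integrable one_le_two).norm
            (hVn.add (integrable_const _)) fun ω => (norm_add_le _ _).trans_eq (by rw [ι.norm_map])
      _ = ∫ ω, ‖V ω‖ ∂μ + ‖s‖ := by simp [integral_add hVn (integrable_const _)]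
  intro x y
  set m := ∫ ω, ‖V ω‖ ∂μ
  have hm : 0 ≤ m := integral_nonneg fun ω => norm_nonneg _
  calc _ ≤ L * (1 + ∫ ω, ‖V ω + ι x‖ ∂μ + ∫ ω, ‖V ω + ι y‖ ∂μ) * ‖x - y‖ :=
        hf.abs_integral_sub_le hL (X := fun ω => V ω + ι x) (Y := fun ω => V ω + ι y)
          (hV.add (memLp_const _)) (hV.add (memLp_const _))
          fun ω => by rw [add_sub_add_left_eq_sub, ← map_sub, ι.norm_map]
    _ ≤ L * (1 + 2 * m + ‖x‖ + ‖y‖) * ‖x - y‖ := by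
        gcongr L * ?_ * _
        linarith [hmoment x, hmoment y]
    _ ≤ L * ((1 + 2 * m) * (1 + ‖x‖ + ‖y‖)) * ‖x - y‖ := by
        gcongr L * ?_ * _
        nlinarith [norm_nonneg x, norm_nonneg y]
    _ = L * (1 + 2 * m) * (1 + ‖x‖ + ‖y‖) * ‖x - y‖ := by ring

end PseudoLipschitz2

namespace EuclideanSpace

theorem norm_le_sum_norm {𝕜 ι : Type*} [RCLike 𝕜] [Fintype ι]
    (v : EuclideanSpace 𝕜 ι) : ‖v‖ ≤ ∑ i, ‖v i‖ := by
  rw [EuclideanSpace.norm_eq]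
  exact Real.sqrt_le_iff.mpr ⟨by positivity,
    Finset.sum_sq_le_sq_sum_of_nonneg fun i _ => norm_nonneg (v i)⟩

variable {ι Λ : Type*} [Fintype ι] [Fintype Λ] [DecidableEq ι]

def blockEmbedding (i : ι) : EuclideanSpace ℝ Λ →ₗᵢ[ℝ] EuclideanSpace ℝ (ι × Λ) where
  toFun s := WithLp.toLp 2 fun p => if p.1 = i then s p.2 else 0
  map_add' s s' := by ext p; by_cases h : p.1 = i <;> simp [h]
  map_smul' c s := by ext p; by_cases h : p.1 = i <;> simp [h]
  norm_map' s := by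
    simp only [EuclideanSpace.norm_eq, Fintype.sum_prod_type]
    rw [Finset.sum_eq_single i (fun k _ hk => by simp [hk]) (by simp)]
    simp

theorem blockEmbedding_apply (i : ι) (s : EuclideanSpace ℝ Λ) (p : ι × Λ) :
    blockEmbedding i s p = if p.1 = i then s p.2 else 0 := rfl

end EuclideanSpace

theorem toLp_dite_eq_sum_blockEmbedding {Λ : Type*} [Fintype Λ] {t : ℕ} (τ : Fin t → ℝ)
    (z : Fin t → Λ → ℝ) (x : EuclideanSpace ℝ Λ) :
    WithLp.toLp 2 (fun rj : Fin (t + 1) × Λ =>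
        if h : (rj.1 : ℕ) < t then τ ⟨rj.1, h⟩ * z ⟨rj.1, h⟩ rj.2 else x rj.2) =
      ∑ r, blockEmbedding r.castSucc (τ r • WithLp.toLp 2 (z r)) +
        blockEmbedding (Fin.last t) x := by
  ext ⟨r, j⟩
  induction r using Fin.lastCases with
  | last => simp [blockEmbedding_apply, eq_comm (a := Fin.last t)]
  | cast r => simp [blockEmbedding_apply]

theorem integral_Ioi_mul_exp_neg_mul_sq {b : ℝ} (hb : 0 < b) :
    ∫ x in Ioi 0, x * exp (-b * x ^ 2) = (2 * b)⁻¹ := by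
  have h := integral_mul_cexp_neg_mul_sq (b := (b : ℂ)) (by simpa using hb)
  rw [← Complex.ofReal_inj, ← integral_complex_ofReal]
  push_cast
  exact h

theorem integral_abs_gaussianReal : ∫ x, |x| ∂gaussianReal 0 1 = √(2 / π) := by
  have hpdf (x : ℝ) : gaussianPDFReal 0 1 x • |x| =
      (√(2 * π))⁻¹ * (|x| * exp (-(1 / 2) * |x| ^ 2)) := by
    simp only [gaussianPDFReal, NNReal.coe_one, mul_one, sub_zero, smul_eq_mul, sq_abs]
    ring_nf
  simp_rw [integral_gaussianReal_eq_integral_smul one_ne_zero, hpdf]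
  rw [integral_const_mul, integral_comp_abs (f := fun x => x * exp (-(1 / 2) * x ^ 2)),
    integral_Ioi_mul_exp_neg_mul_sq (by norm_num)]
  have hsqrt : √(2 * π) * √(2 / π) = 2 := by
    rw [← Real.sqrt_mul (by positivity), show 2 * π * (2 / π) = 2 ^ 2 by field_simp,
      Real.sqrt_sq zero_le_two]
  have hpos : 0 < √(2 * π) := by positivity
  field_simp
  linarith

section

variable {Λ : Type*} [Fintype Λ]

instance : IsProbabilityMeasure (_root_.stdGaussian Λ) := by
  unfold _root_.stdGaussian; infer_instance

theorem memLp_toLp_stdGaussian :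
    MemLp (WithLp.toLp 2 : (Λ → ℝ) → EuclideanSpace ℝ Λ) 2 (_root_.stdGaussian Λ) := by
  have h := IsGaussian.memLp_two_id (μ := ProbabilityTheory.stdGaussian (EuclideanSpace ℝ Λ))
  rw [← map_pi_eq_stdGaussian] at h
  exact (memLp_map_measure_iff aestronglyMeasurable_id (by fun_prop)).mp h

theorem integral_norm_toLp_stdGaussian_le :
    ∫ w, ‖WithLp.toLp 2 w‖ ∂_root_.stdGaussian Λ ≤ Fintype.card Λ * √(2 / π) := by
  have habs : Integrable (fun x : ℝ => |x|) (gaussianReal 0 1) :=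
    ((memLp_id_gaussianReal 1).integrable le_rfl).abs
  calc ∫ w, ‖WithLp.toLp 2 w‖ ∂_root_.stdGaussian Λ
      ≤ ∫ w, ∑ j, |w j| ∂_root_.stdGaussian Λ :=
        integral_mono ((memLp_toLp_stdGaussian (Λ := Λ)).integrable one_le_two).norm
          (integrable_finsetSum _ fun j _ => integrable_comp_eval habs)
          fun w => EuclideanSpace.norm_le_sum_norm (WithLp.toLp 2 w)
    _ = Fintype.card Λ * √(2 / π) := by
        unfold _root_.stdGaussian
        rw [integral_finsetSum _ fun j _ => integrable_comp_eval habs]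
        simp only [integral_comp_eval (f := fun x : ℝ => |x|) (μ := fun _ : Λ => gaussianReal 0 1)
            continuous_abs.aestronglyMeasurable,
          integral_abs_gaussianReal, Finset.sum_const, Finset.card_univ, nsmul_eq_mul]

variable {ι κ : Type*} [Fintype ι] [Fintype κ] [DecidableEq κ] (e : ι → κ) (τ : ι → ℝ)

theorem memLp_sum_blockEmbedding_stdGaussian :
    MemLp (fun z : ι → Λ → ℝ => ∑ r, blockEmbedding (e r) (τ r • WithLp.toLp 2 (z r)))
      2 (Measure.pi fun _ => _root_.stdGaussian Λ) := by
  refine memLp_finsetSum _ fun r _ => ?_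
  have h := (memLp_toLp_stdGaussian (Λ := Λ)).comp_measurePreserving
    (measurePreserving_eval (fun _ : ι => _root_.stdGaussian Λ) r)
  have hcomp : (fun z : ι → Λ → ℝ => blockEmbedding (e r) (τ r • WithLp.toLp 2 (z r))) =
      (τ r • (blockEmbedding (Λ := Λ) (e r)).toContinuousLinearMap) ∘
        ((WithLp.toLp 2 : (Λ → ℝ) → EuclideanSpace ℝ Λ) ∘ Function.eval r) := by
    funext z; simp
  rw [hcomp]
  exact (τ r • (blockEmbedding (e r)).toContinuousLinearMap).comp_memLp' h

theorem integral_norm_sum_blockEmbedding_stdGaussian_le :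
    ∫ z : ι → Λ → ℝ, ‖∑ r, blockEmbedding (e r) (τ r • WithLp.toLp 2 (z r))‖
      ∂(Measure.pi fun _ => _root_.stdGaussian Λ) ≤ Fintype.card Λ * √(2 / π) * ∑ r, |τ r| := by
  have hint (r : ι) : Integrable (fun z : ι → Λ → ℝ => |τ r| * ‖WithLp.toLp 2 (z r)‖)
      (Measure.pi fun _ => _root_.stdGaussian Λ) :=
    (integrable_comp_eval (μ := fun _ : ι => _root_.stdGaussian Λ) (i := r)
      ((memLp_toLp_stdGaussian (Λ := Λ)).integrable one_le_two).norm).const_mul _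
  calc _ ≤ ∫ z : ι → Λ → ℝ, ∑ r, |τ r| * ‖WithLp.toLp 2 (z r)‖
        ∂(Measure.pi fun _ => _root_.stdGaussian Λ) := by
        refine integral_mono
          ((memLp_sum_blockEmbedding_stdGaussian (Λ := Λ) e τ).integrable one_le_two).norm
          (integrable_finsetSum _ fun r _ => hint r) fun z => (norm_sum_le _ _).trans_eq ?_
        simp [norm_smul]
    _ ≤ Fintype.card Λ * √(2 / π) * ∑ r, |τ r| := by
        rw [integral_finsetSum _ fun r _ => hint r, Finset.mul_sum]
        refine Finset.sum_le_sum fun r _ => ?_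
        rw [integral_const_mul, integral_comp_eval (f := fun w => ‖WithLp.toLp 2 w‖), mul_comm]
        · exact mul_le_mul_of_nonneg_right integral_norm_toLp_stdGaussian_le (abs_nonneg _)
        · exact (memLp_toLp_stdGaussian.1).norm

end

/-- **Gaussian expectations of PL(2) functions are PL(2) (Lemma B.4).**  If
`f : (ℝ^Λ)^{t+1} → ℝ` is PL(2) with constant `L`, and `Z₁, …, Z_t` are independent standard
Gaussian vectors in `ℝ^Λ`, then `f̃(s) := E[f(τ₁ Z₁, …, τ_t Z_t, s)]` is PL(2) with constant
`L (1 + 2|Λ| √(2/π) ∑_r τ_r)`. -/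
theorem gaussian_expectation_pl2 (Λ : Type*) [Fintype Λ] (t : ℕ)
    (τ : Fin t → ℝ) (hτ : ∀ r, 0 < τ r)
    (f : EuclideanSpace ℝ (Fin (t + 1) × Λ) → ℝ) (L : ℝ) (hL : 0 < L)
    (hf : ∀ x y : EuclideanSpace ℝ (Fin (t + 1) × Λ),
      |f x - f y| ≤ L * (1 + ‖x‖ + ‖y‖) * ‖x - y‖) :
    ∀ x y : EuclideanSpace ℝ Λ,
      |(∫ z : Fin t → Λ → ℝ,
          f (WithLp.toLp 2 (fun rj : Fin (t + 1) × Λ => if h : (rj.1 : ℕ) < t then τ ⟨rj.1, h⟩ * z ⟨rj.1, h⟩ rj.2 else x rj.2))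
          ∂(Measure.pi fun _ : Fin t => stdGaussian Λ)) -
        (∫ z : Fin t → Λ → ℝ,
          f (WithLp.toLp 2 (fun rj : Fin (t + 1) × Λ => if h : (rj.1 : ℕ) < t then τ ⟨rj.1, h⟩ * z ⟨rj.1, h⟩ rj.2 else y rj.2))
          ∂(Measure.pi fun _ : Fin t => stdGaussian Λ))|
      ≤ (L * (1 + 2 * (Fintype.card Λ : ℝ) * Real.sqrt (2 / Real.pi) * ∑ r, τ r)) *
          (1 + ‖x‖ + ‖y‖) * ‖x - y‖ := by
  simp only [toLp_dite_eq_sum_blockEmbedding]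
  refine (PseudoLipschitz2.integral_comp_add_linearIsometry hf hL.le (blockEmbedding (Fin.last t))
    (memLp_sum_blockEmbedding_stdGaussian Fin.castSucc τ)).mono ?_
  have hmoment := integral_norm_sum_blockEmbedding_stdGaussian_le (Λ := Λ) Fin.castSucc τ
  rw [Finset.sum_congr rfl fun r _ => abs_of_pos (hτ r)] at hmoment
  gcongr L * (1 + ?_)
  linarith
end
end

section
/- Let Γ = [N]^p (p ∈ {1,2,3}), Λ = [2k+1]^p with 2k+1 ≤ N, and for i ∈ Γ let Λ_i be Λ translated to be centered at i. Let t ≥ 1 and let R ∈ ℝ^{t×t} be a correlation matrix with unit diagonal. Let {(Z_i^1, …, Z_i^t)}_{i∈Γ} be i.i.d. across sites i ∈ Γ, each distributed as a centered jointly Gaussian vector in ℝ^t with covariance matrix R (so each Z_i^r ∼ N(0,1)). For each i ∈ Γ define Y_i := (Z^1_{Λ_i∩Γ}, …, Z^t_{Λ_i∩Γ}), the collection of the t Gaussian fields restricted to the window Λ_i ∩ Γ, and let f_i : ℝ^{|Λ_i∩Γ|·t} → ℝ be PL(2) with constant L_i. Then for every ε ∈ (0,1) there exist constants K, κ > 0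 (depending on t, |Λ|, and max_i L_i, but not on |Γ| or ε) such that P( | (1/|Γ|) Σ_{i∈Γ} ( f_i(Y_i) − E[f_i(Y_i)] ) | ≥ ε ) ≤ K·e^{−κ |Γ| ε²}. -/
/-!
Colour each site by its coordinatewise residue modulo `2k+1`. Windows centred at distinct sites
of one colour are disjoint, so within a colour class the summands are independent, and there are
only `|Λ|` classes. Each centred summand is sub-exponential with a `ψ₁`-bound depending only on
`L` and `t|Λ|`: the PL(2) condition bounds it by an affine function of `‖Y_i‖²`, whose
exponential moment is controlled by Jensen's inequality and the Gaussian integral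
`E exp(c Z²) = (1 - 2c)^{-1/2}`. A Chernoff bound in each class and a union bound over the
classes give the claim.
-/

open MeasureTheory ProbabilityTheory

noncomputable section

/-- The lattice `Γ = [N]^p`. -/
abbrev Idx (p N : ℕ) := Fin p → Fin N

/-- The window shape `Λ = [2k+1]^p`. -/
abbrev Win (p k : ℕ) := Fin p → Fin (2 * k + 1)

/-- The absolute lattice position of window coordinate `j` of the window `Λ_i` centered at
`i`, when it lies inside `Γ`; `none` when it falls outside `Γ`. -/
def winIdx? (p N k : ℕ) (i : Idx p N) (j : Win p k) : Option (Idx p N) :=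
  if h : ∀ c, 0 ≤ (i c : ℤ) + (j c : ℤ) - (k : ℤ) ∧ (i c : ℤ) + (j c : ℤ) - (k : ℤ) < (N : ℤ)
  then some (fun c => ⟨((i c : ℤ) + (j c : ℤ) - (k : ℤ)).toNat, by
    obtain ⟨h1, h2⟩ := h c; omega⟩)
  else none

/-- The window data `Y_i = (Z¹_{Λ_i∩Γ}, …, Zᵗ_{Λ_i∩Γ})` extracted from the collection of
fields `z : Γ → ℝᵗ`. -/
def winData (p N k t : ℕ) (z : Idx p N → Fin t → ℝ) (i : Idx p N) :
    {j : Win p k // (winIdx? p N k i j).isSome} × Fin t → ℝ :=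
  fun jr => z ((winIdx? p N k i jr.1.val).get jr.1.prop) jr.2

open Real

lemma Real.exp_le_one_add_add_sq_mul_exp_abs (u : ℝ) : exp u ≤ 1 + u + u ^ 2 * exp |u| := by
  have hinv : exp u * exp (-u) = 1 := by rw [← exp_add, add_neg_cancel, exp_zero]
  have h := add_one_le_exp (-u)
  have hpos := exp_pos u
  rcases le_total 0 u with hu | hu
  · rw [abs_of_nonneg hu]
    have : exp u ≤ 1 + u * exp u := by nlinarith
    nlinarith [mul_le_mul_of_nonneg_left this hu]
  · have hsq : exp u ≤ 1 + u + u ^ 2 := by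
      have h3 : 0 ≤ -u ^ 3 := by nlinarith [sq_nonneg u]
      have h4 : 0 ≤ 1 + u + u ^ 2 := by nlinarith [sq_nonneg (u + 1 / 2)]
      nlinarith [mul_le_mul_of_nonneg_right h h4, exp_pos (-u)]
    nlinarith [one_le_exp (abs_nonneg u), sq_nonneg u]

lemma Real.sq_le_two_mul_exp {v : ℝ} (hv : 0 ≤ v) : v ^ 2 ≤ 2 * exp v := by
  have := pow_div_factorial_le_exp v hv 2
  norm_num [Nat.factorial] at this
  linarith

lemma Real.exp_mul_le_one_add_mul_add_mul_exp_abs_div {β l : ℝ} (hβ : 0 < β)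
    (hl : |l| ≤ 1 / (2 * β)) (x : ℝ) :
    exp (l * x) ≤ 1 + l * x + 8 * β ^ 2 * l ^ 2 * exp (|x| / β) := by
  have hlx : |l * x| ≤ |x| / (2 * β) := by
    rw [abs_mul, div_eq_mul_one_div, mul_comm |x|]
    exact mul_le_mul_of_nonneg_right hl (abs_nonneg x)
  have hsq : x ^ 2 ≤ 8 * β ^ 2 * exp (|x| / (2 * β)) := by
    have := sq_le_two_mul_exp (v := |x| / (2 * β)) (by positivity)
    rw [div_pow, sq_abs, div_le_iff₀ (by positivity)] at this
    linarith
  have hsplit : exp (|x| / β) = exp (|x| / (2 * β)) * exp (|x| / (2 * β)) := by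
    rw [← exp_add]; congr 1; field_simp; ring
  calc exp (l * x) ≤ 1 + l * x + (l * x) ^ 2 * exp |l * x| :=
        exp_le_one_add_add_sq_mul_exp_abs _
    _ ≤ 1 + l * x + l ^ 2 * (8 * β ^ 2 * exp (|x| / (2 * β))) * exp (|x| / (2 * β)) := by
        rw [mul_pow]; gcongr
    _ = 1 + l * x + 8 * β ^ 2 * l ^ 2 * exp (|x| / β) := by rw [hsplit]; ring

lemma Real.exp_one_div_four_le_sqrt_two : exp (1 / 4) ≤ √2 := by
  rw [← exp_log (by positivity : (0 : ℝ) < √2), exp_le_exp, log_sqrt (by norm_num)]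
  linarith [log_two_gt_d9]

lemma Real.exp_sum_le_inv_card_mul_sum_exp {κ : Type*} [Fintype κ] [Nonempty κ] (x : κ → ℝ) :
    exp (∑ j, x j) ≤ (Fintype.card κ : ℝ)⁻¹ * ∑ j, exp (Fintype.card κ * x j) := by
  have hD : (0 : ℝ) < Fintype.card κ := by exact_mod_cast Fintype.card_pos
  have := convexOn_exp.map_sum_le (t := Finset.univ) (w := fun _ => (Fintype.card κ : ℝ)⁻¹)
    (p := fun j => Fintype.card κ * x j) (fun _ _ => by positivity) (by simp)
    (fun _ _ => Set.mem_univ _)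
  simpa [smul_eq_mul, ← mul_assoc, inv_mul_cancel₀ hD.ne', Finset.mul_sum] using this

lemma abs_sum_lt_card_mul_of_forall_abs_sum_fiber_lt {ι C : Type*} [Fintype ι] [Fintype C]
    [DecidableEq C] [Nonempty C] (color : ι → C) (x : ι → ℝ) {a : ℝ}
    (h : ∀ q, |∑ i : {i // color i = q}, x i| < a) : |∑ i, x i| < Fintype.card C * a :=
  calc |∑ i, x i| = |∑ q, ∑ i : {i // color i = q}, x i| := by
        rw [Fintype.sum_fiberwise color x]
    _ ≤ ∑ q, |∑ i : {i // color i = q}, x i| := Finset.abs_sum_le_sum_abs _ _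
    _ < ∑ _q : C, a := Finset.sum_lt_sum_of_nonempty Finset.univ_nonempty fun q _ => h q
    _ = Fintype.card C * a := by simp

lemma measure_abs_mean_ge_le_sum_of_coloring {Ω ι C : Type*} [MeasurableSpace Ω] [Fintype ι]
    [Nonempty ι] [Fintype C] [DecidableEq C] (μ : Measure Ω) (color : ι → C) (X : ι → Ω → ℝ)
    {ε : ℝ} :
    μ {ω | ε ≤ |(Fintype.card ι : ℝ)⁻¹ * ∑ i, X i ω|}
      ≤ ∑ q, μ {ω | Fintype.card ι * ε / Fintype.card C ≤ |∑ i : {i // color i = q}, X i ω|} := by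
  have : Nonempty C := ⟨color (Classical.arbitrary ι)⟩
  have hn : (0 : ℝ) < Fintype.card ι := by exact_mod_cast Fintype.card_pos
  have hM : (0 : ℝ) < Fintype.card C := by exact_mod_cast Fintype.card_pos
  refine (measure_mono fun ω hω => ?_).trans (measure_iUnion_fintype_le _ _)
  by_contra hnot
  simp only [Set.mem_iUnion, Set.mem_ofPred_eq, not_exists, not_le] at hω hnot
  have hlt := abs_sum_lt_card_mul_of_forall_abs_sum_fiber_lt color (X · ω) hnot
  rw [mul_div_cancel₀ _ hM.ne'] at hlt
  rw [abs_mul, abs_of_pos (inv_pos.2 hn), le_inv_mul_iff₀ hn] at hω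
  linarith

section PsiOne

variable {Ω : Type*} [MeasurableSpace Ω] {μ : Measure Ω} {X : Ω → ℝ} {β : ℝ}

/-- `‖X‖_{ψ₁} ≤ β` for the Orlicz function `ψ₁(x) = eˣ - 1`. -/
def HasPsiOneBound (X : Ω → ℝ) (β : ℝ) (μ : Measure Ω) : Prop :=
  Integrable (fun ω => exp (|X ω| / β)) μ ∧ ∫ ω, exp (|X ω| / β) ∂μ ≤ 2

lemma HasPsiOneBound.neg (h : HasPsiOneBound X β μ) : HasPsiOneBound (-X) β μ := by
  simpa [HasPsiOneBound] using h

lemma HasPsiOneBound.mono (h : HasPsiOneBound X β μ) (hX : AEMeasurable X μ) (hβ : 0 < β)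
    {β' : ℝ} (hββ' : β ≤ β') : HasPsiOneBound X β' μ := by
  have hle (ω : Ω) : exp (|X ω| / β') ≤ exp (|X ω| / β) :=
    exp_le_exp.2 (div_le_div_of_nonneg_left (abs_nonneg _) hβ hββ')
  have hint : Integrable (fun ω => exp (|X ω| / β')) μ :=
    h.1.mono' (hX.abs.div_const _).exp.aestronglyMeasurable
      (ae_of_all _ fun ω => by rw [norm_of_nonneg (exp_pos _).le]; exact hle ω)
  exact ⟨hint, (integral_mono hint h.1 hle).trans h.2⟩

lemma hasPsiOneBound_of_abs_le [IsProbabilityMeasure μ] {W : Ω → ℝ} {a b s : ℝ}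
    (hX : Measurable X) (hW : 0 ≤ W) (hXW : ∀ ω, |X ω| ≤ a + b * W ω)
    (hexp : Integrable (fun ω => exp (s * W ω)) μ) (hexp2 : ∫ ω, exp (s * W ω) ∂μ ≤ √2)
    (hβ : 0 < β) (ha : 4 * a ≤ β) (hb : b ≤ s * β) : HasPsiOneBound X β μ := by
  have hle (ω : Ω) : exp (|X ω| / β) ≤ √2 * exp (s * W ω) := by
    have : |X ω| / β ≤ 1 / 4 + s * W ω := by
      rw [div_le_iff₀ hβ]
      nlinarith [hXW ω, mul_le_mul_of_nonneg_right hb (hW ω)]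
    calc exp (|X ω| / β) ≤ exp (1 / 4) * exp (s * W ω) := by rw [← exp_add]; gcongr
      _ ≤ √2 * exp (s * W ω) := by gcongr; exact exp_one_div_four_le_sqrt_two
  have hint : Integrable (fun ω => exp (|X ω| / β)) μ :=
    (hexp.const_mul √2).mono' (hX.abs.div_const _).exp.aestronglyMeasurable
      (ae_of_all _ fun ω => by rw [norm_of_nonneg (exp_pos _).le]; exact hle ω)
  refine ⟨hint, ?_⟩
  calc ∫ ω, exp (|X ω| / β) ∂μ ≤ ∫ ω, √2 * exp (s * W ω) ∂μ :=
        integral_mono hint (hexp.const_mul _) hle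
    _ = √2 * ∫ ω, exp (s * W ω) ∂μ := integral_const_mul _ _
    _ ≤ √2 * √2 := by gcongr
    _ = 2 := mul_self_sqrt zero_le_two

lemma HasPsiOneBound.mgf_le [IsProbabilityMeasure μ] (h : HasPsiOneBound X β μ) (hβ : 0 < β)
    (hX : Measurable X) (hXi : Integrable X μ) (hcent : μ[X] = 0) {l : ℝ}
    (hl : |l| ≤ 1 / (2 * β)) :
    Integrable (fun ω => exp (l * X ω)) μ ∧ mgf X μ l ≤ exp (16 * β ^ 2 * l ^ 2) := by
  have hlin : Integrable (fun ω => 1 + l * X ω) μ := (integrable_const 1).add (hXi.const_mul l)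
  have hbound : Integrable (fun ω => 1 + l * X ω + 8 * β ^ 2 * l ^ 2 * exp (|X ω| / β)) μ :=
    hlin.add (h.1.const_mul _)
  have hpt (ω : Ω) := exp_mul_le_one_add_mul_add_mul_exp_abs_div hβ hl (X ω)
  have hint : Integrable (fun ω => exp (l * X ω)) μ :=
    hbound.mono' (hX.const_mul l).exp.aestronglyMeasurable
      (ae_of_all _ fun ω => by rw [norm_of_nonneg (exp_pos _).le]; exact hpt ω)
  refine ⟨hint, ?_⟩
  calc mgf X μ l ≤ ∫ ω, (1 + l * X ω + 8 * β ^ 2 * l ^ 2 * exp (|X ω| / β)) ∂μ :=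
        integral_mono hint hbound hpt
    _ = 1 + 8 * β ^ 2 * l ^ 2 * ∫ ω, exp (|X ω| / β) ∂μ := by
        rw [integral_add hlin (h.1.const_mul _), integral_add (integrable_const 1)
          (hXi.const_mul l), integral_const_mul, integral_const_mul, hcent]
        simp
    _ ≤ 1 + 16 * β ^ 2 * l ^ 2 := by nlinarith [h.2, sq_nonneg (β * l)]
    _ ≤ exp (16 * β ^ 2 * l ^ 2) := by linarith [add_one_le_exp (16 * β ^ 2 * l ^ 2)]

end PsiOne

section Concentration

variable {Ω : Type*} [MeasurableSpace Ω] {μ : Measure Ω} [IsProbabilityMeasure μ] {β : ℝ}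

lemma measure_sum_ge_le_of_hasPsiOneBound {ι : Type*} [Fintype ι] {X : ι → Ω → ℝ}
    (hind : iIndepFun X μ) (hmeas : ∀ i, Measurable (X i)) (hint : ∀ i, Integrable (X i) μ)
    (hcent : ∀ i, μ[X i] = 0) (hβ : 0 < β) (hψ : ∀ i, HasPsiOneBound (X i) β μ)
    {n a : ℝ} (hn : 0 < n) (hcard : (Fintype.card ι : ℝ) ≤ n) (ha : 0 ≤ a)
    (haβ : a ≤ 16 * β * n) :
    μ.real {ω | a ≤ ∑ i, X i ω} ≤ exp (-(a ^ 2 / (64 * β ^ 2 * n))) := by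
  set l := a / (32 * β ^ 2 * n)
  have hl0 : 0 ≤ l := by positivity
  have hl : |l| ≤ 1 / (2 * β) := by
    rw [abs_of_nonneg hl0, div_le_div_iff₀ (by positivity) (by positivity)]
    nlinarith
  have hmgf (i : ι) := (hψ i).mgf_le hβ (hmeas i) (hint i) (hcent i) hl
  have hsum : {ω | a ≤ ∑ i, X i ω} = {ω | a ≤ (∑ i, X i) ω} := by simp [Finset.sum_apply]
  calc μ.real {ω | a ≤ ∑ i, X i ω}
      ≤ exp (-l * a) * mgf (∑ i, X i) μ l := by
        rw [hsum]
        exact measure_ge_le_exp_mul_mgf a hl0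
          (hind.integrable_exp_mul_sum hmeas fun i _ => (hmgf i).1)
    _ ≤ exp (-l * a) * ∏ _i : ι, exp (16 * β ^ 2 * l ^ 2) := by
        rw [hind.mgf_sum hmeas]
        gcongr with i
        · exact fun i _ => mgf_nonneg
        · exact (hmgf i).2
    _ ≤ exp (-l * a + n * (16 * β ^ 2 * l ^ 2)) := by
        rw [Finset.prod_const, ← exp_nat_mul, ← exp_add, Finset.card_univ]
        gcongr
    _ = exp (-(a ^ 2 / (64 * β ^ 2 * n))) := by
        congr 1; simp only [l]; field_simp; ring

lemma measure_abs_sum_ge_le_of_hasPsiOneBound {ι : Type*} [Fintype ι] {X : ι → Ω → ℝ}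
    (hind : iIndepFun X μ) (hmeas : ∀ i, Measurable (X i)) (hint : ∀ i, Integrable (X i) μ)
    (hcent : ∀ i, μ[X i] = 0) (hβ : 0 < β) (hψ : ∀ i, HasPsiOneBound (X i) β μ)
    {n a : ℝ} (hn : 0 < n) (hcard : (Fintype.card ι : ℝ) ≤ n) (ha : 0 ≤ a)
    (haβ : a ≤ 16 * β * n) :
    μ {ω | a ≤ |∑ i, X i ω|} ≤ ENNReal.ofReal (2 * exp (-(a ^ 2 / (64 * β ^ 2 * n)))) := by
  have hupper := measure_sum_ge_le_of_hasPsiOneBound hind hmeas hint hcent hβ hψ hn hcard ha haβ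
  have hlower := measure_sum_ge_le_of_hasPsiOneBound (X := fun i ω => -X i ω)
    (hind.comp (fun _ => Neg.neg) fun _ => measurable_neg) (fun i => (hmeas i).neg)
    (fun i => (hint i).neg) (fun i => by simp [integral_neg, hcent i]) hβ (fun i => (hψ i).neg)
    hn hcard ha haβ
  have hsplit : {ω | a ≤ |∑ i, X i ω|} ⊆ {ω | a ≤ ∑ i, X i ω} ∪ {ω | a ≤ ∑ i, -X i ω} := by
    intro ω hω
    simp only [Set.mem_ofPred_eq, Set.mem_union, Finset.sum_neg_distrib] at hω ⊢
    rcases le_abs'.1 hω with h | h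
    · right; linarith
    · left; exact h
  calc μ {ω | a ≤ |∑ i, X i ω|}
      ≤ μ {ω | a ≤ ∑ i, X i ω} + μ {ω | a ≤ ∑ i, -X i ω} :=
        (measure_mono hsplit).trans (measure_union_le _ _)
    _ ≤ ENNReal.ofReal (exp (-(a ^ 2 / (64 * β ^ 2 * n))))
          + ENNReal.ofReal (exp (-(a ^ 2 / (64 * β ^ 2 * n)))) := by
        rw [← ofReal_measureReal, ← ofReal_measureReal]
        gcongr
    _ = ENNReal.ofReal (2 * exp (-(a ^ 2 / (64 * β ^ 2 * n)))) := by
        rw [← ENNReal.ofReal_add (by positivity) (by positivity), two_mul]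

theorem measure_abs_mean_sub_integral_ge_le_of_coloring {ι C : Type*} [Fintype ι] [Fintype C]
    [DecidableEq C] {g : ι → Ω → ℝ} (color : ι → C)
    (hind : ∀ q, iIndepFun (fun i : {i // color i = q} => g i) μ)
    (hmeas : ∀ i, Measurable (g i)) (hint : ∀ i, Integrable (g i) μ) (hβ : 0 < β)
    (hψ : ∀ i, HasPsiOneBound (fun ω => g i ω - ∫ ω', g i ω' ∂μ) β μ)
    {ε : ℝ} (hε : 0 < ε) (hεβ : ε ≤ 16 * β) :
    μ {ω | ε ≤ |(Fintype.card ι : ℝ)⁻¹ * ∑ i, (g i ω - ∫ ω', g i ω' ∂μ)|}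
      ≤ ENNReal.ofReal (2 * Fintype.card C *
          exp (-(1 / (64 * β ^ 2 * Fintype.card C ^ 2)) * Fintype.card ι * ε ^ 2)) := by
  set X : ι → Ω → ℝ := fun i ω => g i ω - ∫ ω', g i ω' ∂μ
  rcases isEmpty_or_nonempty ι with hι | hι
  · simp [not_le.2 hε]
  have : Nonempty C := ⟨color (Classical.arbitrary ι)⟩
  set n : ℝ := (Fintype.card ι : ℝ)
  set M : ℝ := (Fintype.card C : ℝ)
  have hn : 0 < n := by simp only [n]; exact_mod_cast Fintype.card_pos
  have hM : 1 ≤ M := by simp only [M]; exact_mod_cast Fintype.card_pos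
  -- the deviation `n ε` of the total sum is split evenly among the `M` colour classes
  set a := n * ε / M
  have hclass (q : C) : μ {ω | a ≤ |∑ i : {i // color i = q}, X i ω|}
      ≤ ENNReal.ofReal (2 * exp (-(1 / (64 * β ^ 2 * M ^ 2)) * n * ε ^ 2)) := by
    have hexponent : -(a ^ 2 / (64 * β ^ 2 * n)) = -(1 / (64 * β ^ 2 * M ^ 2)) * n * ε ^ 2 := by
      simp only [a]; field_simp
    have hεM : ε ≤ 16 * β * M := by nlinarith
    rw [← hexponent]
    refine measure_abs_sum_ge_le_of_hasPsiOneBound (X := fun i : {i // color i = q} => X i)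
      ((hind q).comp (fun i x => x - ∫ ω', g i ω' ∂μ) fun _ => measurable_id.sub_const _)
      (fun i => (hmeas i).sub_const _) (fun i => (hint i).sub (integrable_const _))
      (fun i => by simp [X, integral_sub (hint i) (integrable_const _)]) hβ (fun i => hψ i)
      hn (by simp only [n]; exact_mod_cast Fintype.card_subtype_le _) (by positivity) ?_
    rw [div_le_iff₀ (by positivity)]
    nlinarith [mul_le_mul_of_nonneg_left hεM hn.le]
  calc μ {ω | ε ≤ |n⁻¹ * ∑ i, X i ω|}
      ≤ ∑ q, μ {ω | a ≤ |∑ i : {i // color i = q}, X i ω|} :=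
        measure_abs_mean_ge_le_sum_of_coloring μ color X
    _ ≤ ∑ _q : C, ENNReal.ofReal (2 * exp (-(1 / (64 * β ^ 2 * M ^ 2)) * n * ε ^ 2)) :=
        Finset.sum_le_sum fun q _ => hclass q
    _ = ENNReal.ofReal (2 * M * exp (-(1 / (64 * β ^ 2 * M ^ 2)) * n * ε ^ 2)) := by
        rw [Finset.sum_const, Finset.card_univ, nsmul_eq_mul, ← ENNReal.ofReal_natCast,
          ← ENNReal.ofReal_mul (by positivity)]
        congr 1
        ring

end Concentration

open Function in
theorem ProbabilityTheory.iIndepFun.iIndepFun_finset {Ω ι C : Type*} [MeasurableSpace Ω]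
    {μ : Measure Ω} {β : ι → Type*} [∀ i, MeasurableSpace (β i)] {f : ∀ i, Ω → β i}
    (hf : iIndepFun f μ) (hmeas : ∀ i, Measurable (f i)) {S : C → Finset ι}
    (hS : Pairwise (Disjoint on S)) :
    iIndepFun (fun c ω (i : S c) => f i ω) μ := by
  classical
  rw [iIndepFun_iff_measure_inter_preimage_eq_mul]
  intro T sets hsets
  induction T using Finset.induction_on with
  | empty => simp [hf.isProbabilityMeasure]
  | insert c₀ T hc₀ ih =>
    have hdisj : Disjoint (S c₀) (T.biUnion S) :=
      (Finset.disjoint_biUnion_right _ _ _).2 fun c hc => hS (ne_of_mem_of_not_mem hc hc₀).symm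
    -- the events indexed by `T` only see the coordinates in `T.biUnion S`
    set E : Set (∀ i : T.biUnion S, β i) := ⋂ c : T,
      (fun x (i : S c) => x ⟨i, Finset.mem_biUnion.2 ⟨c, c.2, i.2⟩⟩) ⁻¹' sets c
    have hE : MeasurableSet E :=
      .iInter fun c => (measurable_pi_lambda _ fun _ => measurable_pi_apply _)
        (hsets c (Finset.mem_insert_of_mem c.2))
    have hpre : ⋂ c ∈ T, (fun ω (i : S c) => f i ω) ⁻¹' sets c
        = (fun ω (i : T.biUnion S) => f i ω) ⁻¹' E := by
      ext ω; simp [E]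
    rw [Finset.set_biInter_insert, Finset.prod_insert hc₀,
      ← ih fun c hc => hsets c (Finset.mem_insert_of_mem hc), hpre]
    exact (hf.indepFun_finset _ _ hdisj hmeas).measure_inter_preimage_eq_mul _ _
      (hsets c₀ (Finset.mem_insert_self _ _)) hE

section Gaussian

variable {Ω : Type*} [MeasurableSpace Ω] {μ : Measure Ω}

lemma integral_exp_mul_sq_gaussianReal {c : ℝ} (hc : c < 1 / 2) :
    ∫ x, exp (c * x ^ 2) ∂gaussianReal 0 1 = (√(1 - 2 * c))⁻¹ := by
  have hdens (x : ℝ) : gaussianPDFReal 0 1 x • exp (c * x ^ 2)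
      = (√(2 * π))⁻¹ * exp (-(1 / 2 - c) * x ^ 2) := by
    simp only [gaussianPDFReal, NNReal.coe_one, mul_one, sub_zero, smul_eq_mul]
    rw [mul_assoc, ← exp_add]
    ring_nf
  rw [integral_gaussianReal_eq_integral_smul one_ne_zero]
  simp_rw [hdens]
  rw [integral_const_mul, integral_gaussian,
    show π / (1 / 2 - c) = 2 * π / (1 - 2 * c) by field_simp,
    sqrt_div' _ (by linarith)]
  have : √(2 * π) ≠ 0 := by positivity
  field_simp

lemma integral_exp_mul_sq_of_map_eq_gaussianReal {Z : Ω → ℝ} (hZ : Measurable Z)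
    (hlaw : μ.map Z = gaussianReal 0 1) {c : ℝ} (hc : c < 1 / 2) :
    Integrable (fun ω => exp (c * Z ω ^ 2)) μ ∧
      ∫ ω, exp (c * Z ω ^ 2) ∂μ = (√(1 - 2 * c))⁻¹ := by
  have heq : ∫ ω, exp (c * Z ω ^ 2) ∂μ = (√(1 - 2 * c))⁻¹ := by
    rw [← integral_map (f := fun x => exp (c * x ^ 2)) hZ.aemeasurable (by fun_prop), hlaw,
      integral_exp_mul_sq_gaussianReal hc]
  refine ⟨Integrable.of_integral_ne_zero ?_, heq⟩
  rw [heq]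
  have : 0 < 1 - 2 * c := by linarith
  positivity

lemma integral_exp_mul_sum_sq_le [IsProbabilityMeasure μ] {κ : Type*} [Fintype κ]
    {Y : κ → Ω → ℝ} (hY : ∀ j, Measurable (Y j)) (hlaw : ∀ j, μ.map (Y j) = gaussianReal 0 1)
    {s : ℝ} (hsκ : s * Fintype.card κ ≤ 1 / 4) :
    Integrable (fun ω => exp (s * ∑ j, Y j ω ^ 2)) μ ∧
      ∫ ω, exp (s * ∑ j, Y j ω ^ 2) ∂μ ≤ √2 := by
  rcases isEmpty_or_nonempty κ with hκ | hκ
  · simp [one_le_sqrt.2 one_le_two]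
  set D : ℝ := (Fintype.card κ : ℝ)
  have hc : D * s < 1 / 2 := by linarith
  have hmom (j : κ) := integral_exp_mul_sq_of_map_eq_gaussianReal (hY j) (hlaw j) hc
  have hjensen (ω : Ω) : exp (s * ∑ j, Y j ω ^ 2) ≤ D⁻¹ * ∑ j, exp (D * s * Y j ω ^ 2) := by
    simpa [Finset.mul_sum, mul_assoc] using exp_sum_le_inv_card_mul_sum_exp (s * Y · ω ^ 2)
  have hint_sum : Integrable (fun ω => D⁻¹ * ∑ j, exp (D * s * Y j ω ^ 2)) μ :=
    (integrable_finsetSum _ fun j _ => (hmom j).1).const_mul _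
  have hint : Integrable (fun ω => exp (s * ∑ j, Y j ω ^ 2)) μ :=
    hint_sum.mono' (by fun_prop) (ae_of_all _ fun ω => by
      rw [norm_of_nonneg (exp_pos _).le]; exact hjensen ω)
  refine ⟨hint, ?_⟩
  calc ∫ ω, exp (s * ∑ j, Y j ω ^ 2) ∂μ ≤ ∫ ω, D⁻¹ * ∑ j, exp (D * s * Y j ω ^ 2) ∂μ :=
        integral_mono hint hint_sum hjensen
    _ = (√(1 - 2 * (D * s)))⁻¹ := by
        rw [integral_const_mul, integral_finsetSum _ fun j _ => (hmom j).1]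
        simp_rw [(hmom _).2]
        simp [D]
    _ ≤ √2 := by
        rw [inv_le_iff_one_le_mul₀ (sqrt_pos.2 (by linarith)), ← sqrt_mul zero_le_two]
        exact one_le_sqrt.2 (by linarith)

lemma integrable_and_integral_le_of_integral_exp_mul_le {W : Ω → ℝ} (hW : AEMeasurable W μ)
    {s : ℝ} (hs : 0 < s) (hexp : Integrable (fun ω => exp (s * W ω)) μ)
    (hexp2 : ∫ ω, exp (s * W ω) ∂μ ≤ √2) (hW0 : 0 ≤ W) :
    Integrable W μ ∧ ∫ ω, W ω ∂μ ≤ 2 / s := by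
  have hle (ω : Ω) : W ω ≤ exp (s * W ω) / s := by
    rw [le_div_iff₀ hs]; linarith [add_one_le_exp (s * W ω)]
  have hint : Integrable W μ :=
    (hexp.div_const s).mono' hW.aestronglyMeasurable (ae_of_all _ fun ω => by
      rw [norm_of_nonneg (hW0 ω)]; exact hle ω)
  refine ⟨hint, (integral_mono hint (hexp.div_const s) hle).trans ?_⟩
  rw [integral_div]
  gcongr
  exact hexp2.trans (by rw [sqrt_le_left zero_le_two]; norm_num)

end Gaussian

section PseudoLipschitz

variable {E : Type*} [NormedAddCommGroup E] {f : E → ℝ} {L : ℝ}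

def PseudoLipschitzTwo (L : ℝ) (f : E → ℝ) : Prop :=
  ∀ x y, |f x - f y| ≤ L * (1 + ‖x‖ + ‖y‖) * ‖x - y‖

lemma PseudoLipschitzTwo.continuous (hf : PseudoLipschitzTwo L f) : Continuous f := by
  refine continuous_iff_continuousAt.2 fun x₀ => tendsto_iff_norm_sub_tendsto_zero.2 ?_
  have hbound : Filter.Tendsto (fun x => L * (1 + ‖x‖ + ‖x₀‖) * ‖x - x₀‖) (nhds x₀) (nhds 0) := by
    have : Continuous fun x => L * (1 + ‖x‖ + ‖x₀‖) * ‖x - x₀‖ := by fun_prop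
    simpa using this.tendsto x₀
  exact squeeze_zero (fun _ => norm_nonneg _) (fun x => hf x x₀) hbound

lemma PseudoLipschitzTwo.abs_sub_apply_zero_le (hf : PseudoLipschitzTwo L f) (hL : 0 ≤ L) (x : E) :
    |f x - f 0| ≤ L * (1 + 2 * ‖x‖ ^ 2) := by
  have h := hf x 0
  rw [norm_zero, add_zero, sub_zero] at h
  refine h.trans ?_
  rw [mul_assoc]
  gcongr
  nlinarith [sq_nonneg (‖x‖ - 1)]

variable {Ω : Type*} [MeasurableSpace Ω] {μ : Measure Ω} [IsProbabilityMeasure μ]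

lemma integrable_and_abs_integral_sub_le {g W : Ω → ℝ} {c : ℝ} (hg : Measurable g)
    (hW : Integrable W μ) (hgW : ∀ ω, |g ω - c| ≤ L * (1 + 2 * W ω)) :
    Integrable g μ ∧ |∫ ω, g ω ∂μ - c| ≤ L * (1 + 2 * ∫ ω, W ω ∂μ) := by
  have hbound : Integrable (fun ω => L * (1 + 2 * W ω)) μ :=
    ((integrable_const 1).add (hW.const_mul 2)).const_mul L
  have hint : Integrable g μ :=
    ((integrable_const |c|).add hbound).mono' hg.aestronglyMeasurable (ae_of_all _ fun ω => by
      simp only [Pi.add_apply, norm_eq_abs]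
      linarith [hgW ω, abs_sub_abs_le_abs_sub (g ω) c])
  refine ⟨hint, ?_⟩
  calc |∫ ω, g ω ∂μ - c| = |∫ ω, (g ω - c) ∂μ| := by
        rw [integral_sub hint (integrable_const c), integral_const, probReal_univ, one_smul]
    _ ≤ ∫ ω, |g ω - c| ∂μ := abs_integral_le_integral_abs
    _ ≤ ∫ ω, L * (1 + 2 * W ω) ∂μ := integral_mono (hint.sub (integrable_const c)).abs hbound hgW
    _ = L * (1 + 2 * ∫ ω, W ω ∂μ) := by
        rw [integral_const_mul, integral_add (integrable_const 1) (hW.const_mul 2),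
          integral_const_mul, integral_const, probReal_univ, one_smul]

theorem PseudoLipschitzTwo.hasPsiOneBound_comp {κ : Type*} [Fintype κ] {d : ℕ}
    (hκ : Fintype.card κ ≤ d) {f : EuclideanSpace ℝ κ → ℝ} (hL : 0 < L)
    (hf : PseudoLipschitzTwo L f) {Y : Ω → EuclideanSpace ℝ κ} (hY : Measurable Y)
    (hlaw : ∀ j, μ.map (fun ω => Y ω j) = gaussianReal 0 1) :
    Integrable (fun ω => f (Y ω)) μ ∧
      HasPsiOneBound (fun ω => f (Y ω) - ∫ ω', f (Y ω') ∂μ) (L * (8 + 72 * (d + 1))) μ := by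
  set s : ℝ := 1 / (4 * (d + 1))
  have hs : 0 < s := by positivity
  have hsκ : s * Fintype.card κ ≤ 1 / 4 := by
    have : (Fintype.card κ : ℝ) ≤ d := by exact_mod_cast hκ
    rw [div_mul_eq_mul_div, one_mul, div_le_div_iff₀ (by positivity) (by norm_num)]
    linarith
  set W : Ω → ℝ := fun ω => ‖Y ω‖ ^ 2
  obtain ⟨hexp, hexp2⟩ : Integrable (fun ω => exp (s * W ω)) μ ∧
      ∫ ω, exp (s * W ω) ∂μ ≤ √2 := by
    simpa [W, EuclideanSpace.real_norm_sq_eq] using integral_exp_mul_sum_sq_le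
      (fun j => (measurable_pi_apply j).comp ((WithLp.measurable_ofLp 2 _).comp hY)) hlaw hsκ
  obtain ⟨hWint, hWmean⟩ := integrable_and_integral_le_of_integral_exp_mul_le
    (by fun_prop) hs hexp hexp2 fun ω => sq_nonneg _
  have hmeas : Measurable fun ω => f (Y ω) := hf.continuous.measurable.comp hY
  obtain ⟨hint, hmean⟩ := integrable_and_abs_integral_sub_le hmeas hWint
    fun ω => hf.abs_sub_apply_zero_le hL.le (Y ω)
  have h2s : 2 / s = 8 * (d + 1) := by simp only [s]; field_simp; norm_num
  refine ⟨hint, hasPsiOneBound_of_abs_le (a := L * (2 + 16 * (d + 1))) (b := 2 * L)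
    (hmeas.sub_const _) (fun ω => sq_nonneg _) (fun ω => ?_) hexp hexp2 (by positivity) ?_ ?_⟩
  · have hdev := abs_sub_le (f (Y ω)) (f 0) (∫ ω', f (Y ω') ∂μ)
    rw [abs_sub_comm (f 0)] at hdev
    have hfY := hf.abs_sub_apply_zero_le hL.le (Y ω)
    have : L * (2 * ∫ ω, W ω ∂μ) ≤ L * (16 * (d + 1)) :=
      mul_le_mul_of_nonneg_left (by linarith) hL.le
    nlinarith
  · nlinarith
  · have : s * (L * (8 + 72 * (d + 1))) = 2 * L / (d + 1) + 18 * L := by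
      simp only [s]; field_simp; ring
    rw [this]
    have : 0 ≤ 2 * L / (d + 1) := by positivity
    linarith

end PseudoLipschitz

section Window

variable {p N k : ℕ}

lemma coe_apply_of_winIdx?_eq_some {i x : Idx p N} {j : Win p k}
    (hx : winIdx? p N k i j = some x) (c : Fin p) : (x c : ℤ) = i c + j c - k := by
  unfold winIdx? at hx
  split_ifs at hx with hcond
  cases Option.some.inj hx
  exact Int.toNat_of_nonneg (hcond c).1

/-- The window `Λ_i ∩ Γ`. -/
def winFinset (p N k : ℕ) (i : Idx p N) : Finset (Idx p N) :=
  Finset.univ.image fun j : {j : Win p k // (winIdx? p N k i j).isSome} =>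
    (winIdx? p N k i j).get j.2

lemma abs_sub_le_of_mem_winFinset {i x : Idx p N} (hx : x ∈ winFinset p N k i) (c : Fin p) :
    |(x c : ℤ) - i c| ≤ k := by
  obtain ⟨j, -, rfl⟩ := Finset.mem_image.1 hx
  rw [coe_apply_of_winIdx?_eq_some (Option.some_get j.2).symm c, abs_le]
  have := (j.1 c).isLt
  omega

def siteClass (p N k : ℕ) (i : Idx p N) : Win p k :=
  fun c => ⟨i c % (2 * k + 1), Nat.mod_lt _ (by omega)⟩

lemma disjoint_winFinset_of_siteClass_eq {i i' : Idx p N}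
    (h : siteClass p N k i = siteClass p N k i') (hne : i ≠ i') :
    Disjoint (winFinset p N k i) (winFinset p N k i') := by
  refine Finset.disjoint_left.2 fun x hx hx' => hne (funext fun c => Fin.ext ?_)
  have h1 := abs_sub_le_of_mem_winFinset hx c
  have h2 := abs_sub_le_of_mem_winFinset hx' c
  have hmod : (i c : ℕ) ≡ i' c [MOD 2 * k + 1] := congrArg Fin.val (congrFun h c)
  have hdvd : ((2 * k + 1 : ℕ) : ℤ) ∣ (i' c : ℤ) - i c := hmod.dvd
  have hlt : |(i' c : ℤ) - i c| < ((2 * k + 1 : ℕ) : ℤ) := by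
    rw [abs_le] at h1 h2
    rw [abs_lt]
    push_cast
    omega
  have := Int.eq_zero_of_abs_lt_dvd hdvd hlt
  omega

lemma measurable_winData {t : ℕ} (i : Idx p N) :
    Measurable fun z : Idx p N → Fin t → ℝ => winData p N k t z i :=
  measurable_pi_lambda _ fun _ => (measurable_pi_apply _).comp (measurable_pi_apply _)

lemma card_winData_index_le {t : ℕ} (i : Idx p N) :
    Fintype.card ({j : Win p k // (winIdx? p N k i j).isSome} × Fin t)
      ≤ Fintype.card (Win p k) * t := by
  rw [Fintype.card_prod, Fintype.card_fin]
  exact Nat.mul_le_mul_right _ (Fintype.card_subtype_le _)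

lemma iIndepFun_comp_winData_of_siteClass_eq {t : ℕ} (ν : Measure (Fin t → ℝ))
    [IsProbabilityMeasure ν]
    {F : ∀ i : Idx p N, ({j : Win p k // (winIdx? p N k i j).isSome} × Fin t → ℝ) → ℝ}
    (hF : ∀ i, Measurable (F i)) (q : Win p k) :
    iIndepFun (fun (i : {i // siteClass p N k i = q}) z => F i (winData p N k t z i))
      (Measure.pi fun _ : Idx p N => ν) := by
  have hsites : iIndepFun (fun (a : Idx p N) (z : Idx p N → Fin t → ℝ) => z a)
      (Measure.pi fun _ => ν) :=
    iIndepFun_pi fun _ => measurable_id.aemeasurable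
  have hblocks := hsites.iIndepFun_finset measurable_pi_apply
    (S := fun i : {i // siteClass p N k i = q} => winFinset p N k i) fun i i' hne =>
      disjoint_winFinset_of_siteClass_eq (i.2.trans i'.2.symm) (Subtype.coe_ne_coe.2 hne)
  -- `winData z i` factors through the restriction of `z` to `winFinset p N k i`
  exact hblocks.comp
    (fun i w => F i fun jr => w ⟨_, Finset.mem_image_of_mem _ (Finset.mem_univ jr.1)⟩ jr.2)
    fun i => (hF i).comp
      (measurable_pi_lambda _ fun _ => (measurable_pi_apply _).comp (measurable_pi_apply _))

end Window

lemma map_pi_apply_apply_eq_gaussianReal {ι : Type*} [Fintype ι] {t : ℕ}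
    {ν : Measure (Fin t → ℝ)} [IsProbabilityMeasure ν] {R : Matrix (Fin t) (Fin t) ℝ}
    (hR : ∀ r, R r r = 1)
    (hν : ∀ a : Fin t → ℝ, ν.map (fun y => ∑ r, a r * y r) =
      gaussianReal 0 (Real.toNNReal (∑ r, ∑ s, a r * a s * R r s)))
    (i : ι) (r : Fin t) :
    (Measure.pi fun _ : ι => ν).map (fun z => z i r) = gaussianReal 0 1 := by
  have hcoord : ν.map (fun y => y r) = gaussianReal 0 1 := by
    simpa [Pi.single_apply, hR] using hν (Pi.single r 1)
  calc (Measure.pi fun _ : ι => ν).map (fun z => z i r)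
      = ((Measure.pi fun _ : ι => ν).map (Function.eval i)).map (fun y => y r) := by
        rw [Measure.map_map (measurable_pi_apply r) (measurable_pi_apply i)]
        rfl
    _ = gaussianReal 0 1 := by rw [(measurePreserving_eval _ i).map_eq, hcoord]

theorem overlapping_gaussian_pl2_concentration_general
    (p : ℕ) (k t : ℕ)
    (L : ℝ) (hL : 0 < L) :
    ∃ K κ : ℝ, 0 < K ∧ 0 < κ ∧
      ∀ (N : ℕ), 0 < N → 2 * k + 1 ≤ N →
      ∀ R : Matrix (Fin t) (Fin t) ℝ, (∀ r, R r r = 1) → R.IsSymm → R.PosSemidef →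
      ∀ ν : Measure (Fin t → ℝ), IsProbabilityMeasure ν →
      -- `ν` is the centered jointly Gaussian law on `ℝᵗ` with covariance `R`
      (∀ a : Fin t → ℝ, Measure.map (fun y => ∑ r, a r * y r) ν =
        gaussianReal 0 (Real.toNNReal (∑ r, ∑ s, a r * a s * R r s))) →
      ∀ f : ∀ i : Idx p N,
        EuclideanSpace ℝ ({j : Win p k // (winIdx? p N k i j).isSome} × Fin t) → ℝ,
      (∀ i, ∀ x y : EuclideanSpace ℝ ({j : Win p k // (winIdx? p N k i j).isSome} × Fin t),
        |f i x - f i y| ≤ L * (1 + ‖x‖ + ‖y‖) * ‖x - y‖) →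
      ∀ ε : ℝ, 0 < ε → ε < 1 →
        (Measure.pi fun _ : Idx p N => ν)
          {z | ε ≤ |(Fintype.card (Idx p N) : ℝ)⁻¹ *
              ∑ i, (f i (WithLp.toLp 2 (winData p N k t z i)) -
                ∫ z', f i (WithLp.toLp 2 (winData p N k t z' i)) ∂(Measure.pi fun _ : Idx p N => ν))|}
          ≤ ENNReal.ofReal (K * Real.exp (-κ * (Fintype.card (Idx p N)) * ε ^ 2)) := by
  set M : ℕ := Fintype.card (Win p k)
  have hβ₀ : 0 < L * (8 + 72 * ((M * t : ℕ) + 1)) := by positivity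
  set β : ℝ := L * (8 + 72 * ((M * t : ℕ) + 1)) + 1
  refine ⟨2 * M, 1 / (64 * β ^ 2 * M ^ 2), by positivity, by positivity, ?_⟩
  intro N _ _ R hR _ _ ν _ hν f hf ε hε hε1
  replace hf (i : Idx p N) : PseudoLipschitzTwo L (f i) := hf i
  have hF (i : Idx p N) : Measurable fun v => f i (WithLp.toLp 2 v) :=
    (hf i).continuous.measurable.comp (WithLp.measurable_toLp 2 _)
  have hsite (i : Idx p N) := (hf i).hasPsiOneBound_comp (card_winData_index_le i) hL
    ((WithLp.measurable_toLp 2 _).comp (measurable_winData i))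
    fun jr => map_pi_apply_apply_eq_gaussianReal hR hν _ jr.2
  have hmeas (i : Idx p N) := (hF i).comp (measurable_winData (t := t) i)
  exact measure_abs_mean_sub_integral_ge_le_of_coloring (siteClass p N k)
    (iIndepFun_comp_winData_of_siteClass_eq ν hF) hmeas (fun i => (hsite i).1)
    (by positivity)
    (fun i => (hsite i).2.mono ((hmeas i).sub_const _).aemeasurable hβ₀ (by linarith))
    hε (by linarith)

/-- **Concentration of PL(2) functions of overlapping windows of i.i.d. jointly Gaussian
fields (Lemma D.4).**  Let the per-site vectors `(Z_i¹,…,Z_iᵗ)` be i.i.d. across sites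
`i ∈ Γ = [N]^p`, centered jointly Gaussian with correlation matrix `R` (unit diagonal).  If
each `f_i` is PL(2) with constant at most `L`, then with `K, κ > 0` depending only on
`t, |Λ|, L` (not on `|Γ|` or `ε`),
`P(|Γ|⁻¹ |∑_i (f_i(Y_i) − E f_i(Y_i))| ≥ ε) ≤ K exp(−κ |Γ| ε²)` for all `ε ∈ (0,1)`. -/
theorem overlapping_gaussian_pl2_concentration
    (p : ℕ) (hp : p = 1 ∨ p = 2 ∨ p = 3) (k t : ℕ) (ht : 1 ≤ t)
    (L : ℝ) (hL : 0 < L) :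
    ∃ K κ : ℝ, 0 < K ∧ 0 < κ ∧
      ∀ (N : ℕ), 0 < N → 2 * k + 1 ≤ N →
      ∀ R : Matrix (Fin t) (Fin t) ℝ, (∀ r, R r r = 1) → R.IsSymm → R.PosSemidef →
      ∀ ν : Measure (Fin t → ℝ), IsProbabilityMeasure ν →
      -- `ν` is the centered jointly Gaussian law on `ℝᵗ` with covariance `R`
      (∀ a : Fin t → ℝ, Measure.map (fun y => ∑ r, a r * y r) ν =
        gaussianReal 0 (Real.toNNReal (∑ r, ∑ s, a r * a s * R r s))) →
      ∀ f : ∀ i : Idx p N,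
        EuclideanSpace ℝ ({j : Win p k // (winIdx? p N k i j).isSome} × Fin t) → ℝ,
      (∀ i, ∀ x y : EuclideanSpace ℝ ({j : Win p k // (winIdx? p N k i j).isSome} × Fin t),
        |f i x - f i y| ≤ L * (1 + ‖x‖ + ‖y‖) * ‖x - y‖) →
      ∀ ε : ℝ, 0 < ε → ε < 1 →
        (Measure.pi fun _ : Idx p N => ν)
          {z | ε ≤ |(Fintype.card (Idx p N) : ℝ)⁻¹ *
              ∑ i, (f i (WithLp.toLp 2 (winData p N k t z i)) -
                ∫ z', f i (WithLp.toLp 2 (winData p N k t z' i)) ∂(Measure.pi fun _ : Idx p N => ν))|}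
          ≤ ENNReal.ofReal (K * Real.exp (-κ * (Fintype.card (Idx p N)) * ε ^ 2)) :=
  overlapping_gaussian_pl2_concentration_general p k t L hL

end
end
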